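/- arXiv:2507.20715 — 5 statements merged into one kernel-verified Lean document; each statement's English description precedes it below -/
import Mathlib

section
/- Let n = 4k, let a_1 be a nonsquare in F_{3^n}, let I ∈ F_{3^n} be a primitive 4th root of unity, and define a_2 = ± I^k a_1^{(3^k+1)/2} ((-1)^k a_1^{(3^k-1)(3^{2k}+1)/4} + a_1^{-(3^k-1)(3^{2k}+1)/4}) (either sign). Then a_2^{3^{2k}-1} = (-1)^k a_1^{(3^k+1)(3^{2k}-1)/2}. -/
private lemma par_aux (k : ℕ) : ((3:ℕ)^k - 1)/2 % 2 = k % 2 := by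
  induction k with
  | zero => simp
  | succ k ih =>
    have hs : (3:ℕ)^(k+1) = 3*3^k := by ring
    have hodd : (3:ℕ)^k % 2 = 1 := by simp [Nat.pow_mod]
    omega

theorem a2_pow_identity
    (k : ℕ) (hk : 0 < k) (n : ℕ) (hn : n = 4 * k)
    (F : Type*) [Field F] [Fintype F] (hF : Fintype.card F = 3 ^ n)
    (a₁ : F) (ha₁ : a₁ ^ ((3 ^ n - 1) / 2) = -1)
    (I : F) (hI : orderOf I = 4)
    (ε : F) (hε : ε = 1 ∨ ε = -1)
    (a₂ : F)
    (ha₂ : a₂ = ε * I ^ k * a₁ ^ ((3 ^ k + 1) / 2) *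
      ((-1 : F) ^ k * a₁ ^ ((3 ^ k - 1) * (3 ^ (2 * k) + 1) / 4) +
        (a₁ ^ ((3 ^ k - 1) * (3 ^ (2 * k) + 1) / 4))⁻¹))
    (ha₂0 : a₂ ≠ 0) :
    a₂ ^ (3 ^ (2 * k) - 1) = (-1 : F) ^ k * a₁ ^ ((3 ^ k + 1) * (3 ^ (2 * k) - 1) / 2) := by
  subst hn
  -- characteristic 3
  haveI hp3 : Fact (Nat.Prime 3) := ⟨by norm_num⟩
  haveI : CharP F (ringChar F) := ringChar.charP F
  obtain ⟨m, hpm, hcard⟩ := FiniteField.card F (ringChar F)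
  haveI : Fact (Nat.Prime (ringChar F)) := ⟨hpm⟩
  have hchar3 : ringChar F = 3 := by
    have hdvd : ringChar F ∣ 3 ^ (4*k) := by
      rw [← hF, hcard]; exact dvd_pow_self _ (by exact_mod_cast m.ne_zero)
    exact (Nat.prime_dvd_prime_iff_eq hpm (by norm_num)).mp (hpm.dvd_of_dvd_pow hdvd)
  haveI hc3 : CharP F 3 := hchar3 ▸ (ringChar.charP F)
  -- numeric setup
  have h3 : (1:ℕ) ≤ 3^k := Nat.one_le_pow _ _ (by norm_num)
  have h3' : (3:ℕ)^1 ≤ 3^k := Nat.pow_le_pow_right (by norm_num) hk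
  obtain ⟨u, hu⟩ : Odd ((3:ℕ)^k) := Odd.pow (by decide)
  set v : ℕ := 2*(u*u) + 2*u + 1 with hv
  have hQ : (3:ℕ)^(2*k) = 4*(u*u) + 4*u + 1 := by
    rw [show (3:ℕ)^(2*k) = ((3:ℕ)^k)^2 by ring, hu]; ring
  have h8 : (3:ℕ)^(4*k) = 8*(u*(u+1)*v) + 1 := by
    rw [show (3:ℕ)^(4*k) = ((3:ℕ)^k)^4 by ring, hu, hv]; ring
  have half : ((3:ℕ)^(4*k) - 1)/2 = 4*(u*(u+1)*v) := by omega
  have he : ((3:ℕ)^k - 1) * ((3:ℕ)^(2*k)+1) / 4 = u*v := by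
    have h4 : ((3:ℕ)^k - 1) * ((3:ℕ)^(2*k)+1) = 4*(u*v) := by
      rw [show (3:ℕ)^k - 1 = 2*u by omega, show (3:ℕ)^(2*k)+1 = 2*v by omega]; ring
    omega
  have hcexp : ((3:ℕ)^k + 1)/2 = u + 1 := by omega
  have hD : u*v*((3:ℕ)^(2*k)+1) = u * (((3:ℕ)^(4*k)-1)/2) + 2*(u*v) := by
    rw [half, show (3:ℕ)^(2*k)+1 = 2*v by omega, hv]; ring
  have hE : ((3:ℕ)^k+1)*((3:ℕ)^(2*k)-1)/2 = (u+1)*((3:ℕ)^(2*k)-1) := by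
    have h2 : ((3:ℕ)^k+1)*((3:ℕ)^(2*k)-1) = 2*((u+1)*((3:ℕ)^(2*k)-1)) := by
      rw [show (3:ℕ)^k + 1 = 2*(u+1) by omega]; ring
    omega
  -- parity
  have hupar : u % 2 = k % 2 := by
    have h := par_aux k
    rw [show (3:ℕ)^k - 1 = 2*u by omega, Nat.mul_div_cancel_left u (by norm_num)] at h
    exact h
  have hpar : (-1:F)^u = (-1:F)^k := by
    rcases Nat.even_or_odd k with hk2 | hk2
    · rw [hk2.neg_one_pow, (Nat.even_iff.mpr (by rw [hupar]; exact Nat.even_iff.mp hk2)).neg_one_pow]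
    · rw [hk2.neg_one_pow, (Nat.odd_iff.mpr (by rw [hupar]; exact Nat.odd_iff.mp hk2)).neg_one_pow]
  have hmm : ((-1:F)^k) * ((-1:F)^k) = 1 := by
    rw [← pow_add, ← two_mul, pow_mul, neg_one_sq, one_pow]
  have hminv : ((-1:F)^k)⁻¹ = (-1:F)^k := inv_eq_of_mul_eq_one_right hmm
  -- a₁ ≠ 0
  have h81 : (3:ℕ)^4 ≤ 3^(4*k) := Nat.pow_le_pow_right (by norm_num) (by omega)
  have ha₁0 : a₁ ≠ 0 := by
    intro h
    rw [h, zero_pow (by omega : ((3:ℕ)^(4*k)-1)/2 ≠ 0)] at ha₁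
    exact one_ne_zero (neg_eq_zero.mp ha₁.symm)
  set b : F := a₁ ^ (u*v) with hb
  have hbne : b ≠ 0 := pow_ne_zero _ ha₁0
  -- Frobenius action on b
  have hb1 : b^((3:ℕ)^(2*k)+1) = (-1:F)^k * b^2 := by
    rw [hb, ← pow_mul, hD, pow_add, mul_comm u (((3:ℕ)^(4*k)-1)/2), pow_mul, ha₁,
      mul_comm 2 (u*v), pow_mul, hpar]
  have hbQ : b^((3:ℕ)^(2*k)) = (-1:F)^k * b := by
    have h2 : b^((3:ℕ)^(2*k)) * b = ((-1:F)^k * b) * b := by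
      rw [← pow_succ, hb1, sq]; ring
    exact mul_right_cancel₀ hbne h2
  -- rewrite ha₂
  rw [he, hcexp] at ha₂
  set S : F := (-1:F)^k * b + b⁻¹ with hS
  -- S ≠ 0
  have hSne : S ≠ 0 := by
    intro h
    apply ha₂0
    rw [ha₂, h, mul_zero]
  -- S^Q = (-1)^k * S
  have hoddQ : ((-1:F)^k)^((3:ℕ)^(2*k)) = (-1:F)^k := by
    rw [show (3:ℕ)^(2*k) = 2*(2*(u*u)+2*u) + 1 by omega, pow_succ, pow_mul,
      show ((-1:F)^k)^2 = 1 by rw [sq, hmm], one_pow, one_mul]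
  have hSQ : S ^ ((3:ℕ)^(2*k)) = (-1:F)^k * S := by
    have hfr := add_pow_char_pow ((-1:F)^k * b) b⁻¹ 3 (2*k)
    rw [hS, hfr, mul_pow, hoddQ, inv_pow, hbQ, mul_inv, hminv]
    ring
  have hSpow : S ^ ((3:ℕ)^(2*k) - 1) = (-1:F)^k := by
    have h1 : S^((3:ℕ)^(2*k)-1) * S = (-1:F)^k * S := by
      rw [← pow_succ, Nat.sub_add_cancel (Nat.one_le_pow _ _ (by norm_num)), hSQ]
    exact mul_right_cancel₀ hSne h1
  -- epsilon and I powers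
  have hε2 : ε^2 = 1 := by rcases hε with h | h <;> rw [h] <;> ring
  have hεpow : ε ^ ((3:ℕ)^(2*k) - 1) = 1 := by
    rw [show (3:ℕ)^(2*k) - 1 = 2*(2*(u*u)+2*u) by omega, pow_mul, hε2, one_pow]
  have hI4 : I ^ 4 = 1 := by rw [← hI]; exact pow_orderOf_eq_one I
  have hIpow : (I^k) ^ ((3:ℕ)^(2*k) - 1) = 1 := by
    rw [show (3:ℕ)^(2*k) - 1 = 4*(u*u+u) by omega, ← pow_mul,
      show k*(4*(u*u+u)) = 4*(k*(u*u+u)) by ring, pow_mul, hI4, one_pow]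
  -- final assembly
  rw [ha₂, hE, mul_pow, mul_pow, mul_pow, hεpow, hIpow, hSpow, ← pow_mul]
  ring
end

section
/- Let n = 4k, let a_1 be a nonsquare in F_{3^n}, and define a_2 as in (the binomial construction): a_2 = ± I^k a_1^{(3^k+1)/2}((-1)^k a_1^{(3^k-1)(3^{2k}+1)/4} + a_1^{-(3^k-1)(3^{2k}+1)/4}) with I a primitive 4th root of unity. Then a_2 is also a nonsquare in F_{3^n}. -/
/-!
Write `q = 3 ^ k`, `N = (q ^ 4 - 1) / 2`, `u = a₁ ^ ((q - 1) * (q ^ 2 + 1) / 4)` and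
`σ = (-1) ^ ((q - 1) / 2) = (-1) ^ k`.
Since `(q - 1) * (q ^ 2 + 1) / 4 * (q ^ 2 - 1) = N * (q - 1) / 2`, the nonsquare condition
`a₁ ^ N = -1` gives `u ^ q ^ 2 = σ * u`. As `x ↦ x ^ q ^ 2` is a field endomorphism in
characteristic 3, `s = σ * u + u⁻¹` satisfies `s ^ q ^ 2 = σ * s`, so `s ^ (q ^ 2 - 1) = σ`, and
`s ^ N = σ` because `N = (q ^ 2 - 1) * ((q ^ 2 + 1) / 2)` with odd second factor. Moreover
`(a₁ ^ ((q + 1) / 2)) ^ N = -σ`, and `ε`, `I ^ k` are killed by `N` since `4 ∣ N`.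
Hence `a₂ ^ N = -σ * σ = -1`.
-/

lemma Nat.three_pow_sub_one_div_two_mod_two (k : ℕ) : (3 ^ k - 1) / 2 % 2 = k % 2 := by
  induction k with
  | zero => rfl
  | succ k ih =>
    have h : 3 ^ (k + 1) = 3 * 3 ^ k := by ring
    have : 3 ^ k % 2 = 1 := Nat.odd_iff.mp (Odd.pow ⟨1, rfl⟩)
    omega

namespace Odd

variable {q : ℕ}

lemma pow_four_sub_one_div_two_eq (hq : Odd q) :
    (q ^ 4 - 1) / 2 = (q ^ 2 - 1) * ((q ^ 2 + 1) / 2) := by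
  obtain ⟨t, rfl⟩ := hq
  have h1 : (2 * t + 1) ^ 4 - 1 = 2 * ((4 * t ^ 2 + 4 * t) * (2 * t ^ 2 + 2 * t + 1)) := by
    rw [Nat.sub_eq_iff_eq_add (Nat.one_le_pow _ _ (by omega))]; ring
  have h2 : (2 * t + 1) ^ 2 - 1 = 4 * t ^ 2 + 4 * t := by
    rw [Nat.sub_eq_iff_eq_add (Nat.one_le_pow _ _ (by omega))]; ring
  have h3 : (2 * t + 1) ^ 2 + 1 = 2 * (2 * t ^ 2 + 2 * t + 1) := by ring
  rw [h1, h2, h3, Nat.mul_div_cancel_left _ two_pos, Nat.mul_div_cancel_left _ two_pos]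

lemma sub_one_mul_sq_add_one_div_four_mul_sq (hq : Odd q) :
    (q - 1) * (q ^ 2 + 1) / 4 * q ^ 2 =
      (q - 1) * (q ^ 2 + 1) / 4 + (q ^ 4 - 1) / 2 * ((q - 1) / 2) := by
  rw [hq.pow_four_sub_one_div_two_eq]
  obtain ⟨t, rfl⟩ := hq
  have hm : (2 * t + 1 - 1) * ((2 * t + 1) ^ 2 + 1) = 4 * (t * (2 * t ^ 2 + 2 * t + 1)) := by
    rw [Nat.add_sub_cancel]; ring
  have h2 : (2 * t + 1) ^ 2 - 1 = 4 * t ^ 2 + 4 * t := by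
    rw [Nat.sub_eq_iff_eq_add (Nat.one_le_pow _ _ (by omega))]; ring
  have h3 : (2 * t + 1) ^ 2 + 1 = 2 * (2 * t ^ 2 + 2 * t + 1) := by ring
  rw [hm, h2, h3, Nat.mul_div_cancel_left _ four_pos, Nat.mul_div_cancel_left _ two_pos,
    Nat.add_sub_cancel, Nat.mul_div_cancel_left _ two_pos]
  ring

lemma odd_sq_add_one_div_two (hq : Odd q) : Odd ((q ^ 2 + 1) / 2) := by
  obtain ⟨t, rfl⟩ := hq
  have h : (2 * t + 1) ^ 2 + 1 = 2 * (2 * (t ^ 2 + t) + 1) := by ring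
  rw [h, Nat.mul_div_cancel_left _ two_pos]
  exact odd_two_mul_add_one _

lemma four_dvd_pow_four_sub_one_div_two (hq : Odd q) : 4 ∣ (q ^ 4 - 1) / 2 := by
  obtain ⟨t, rfl⟩ := hq
  rw [(odd_two_mul_add_one t).pow_four_sub_one_div_two_eq]
  refine Dvd.dvd.mul_right ⟨t ^ 2 + t, ?_⟩ _
  rw [Nat.sub_eq_iff_eq_add (Nat.one_le_pow _ _ (by omega))]; ring

end Odd

lemma pow_sq_eq_neg_one_pow_mul_of_pow_eq_neg_one {M : Type*} [CommMonoid M] [HasDistribNeg M]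
    {q : ℕ} (hq : Odd q) {a : M} (ha : a ^ ((q ^ 4 - 1) / 2) = -1) :
    (a ^ ((q - 1) * (q ^ 2 + 1) / 4)) ^ q ^ 2 =
      (-1) ^ ((q - 1) / 2) * a ^ ((q - 1) * (q ^ 2 + 1) / 4) := by
  rw [← pow_mul, hq.sub_one_mul_sq_add_one_div_four_mul_sq, pow_add, pow_mul, ha, mul_comm]

lemma pow_pow_four_sub_one_div_two_of_pow_sq {M₀ : Type*} [MonoidWithZero M₀]
    [IsRightCancelMulZero M₀] [HasDistribNeg M₀] {q e : ℕ} (hq : Odd q) {s : M₀} (hs : s ≠ 0)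
    (h : s ^ q ^ 2 = (-1) ^ e * s) : s ^ ((q ^ 4 - 1) / 2) = (-1) ^ e := by
  have hq2 : q ^ 2 ≠ 0 := pow_ne_zero _ hq.pos.ne'
  have h1 : s ^ (q ^ 2 - 1) = (-1) ^ e :=
    mul_right_cancel₀ hs (by rw [pow_sub_one_mul hq2, h])
  rw [hq.pow_four_sub_one_div_two_eq, pow_mul, h1, ← pow_mul, mul_comm, pow_mul,
    hq.odd_sq_add_one_div_two.neg_one_pow]

section

variable {F : Type*} [Field F]

lemma neg_one_pow_mul_add_inv_pow_expChar_pow (p m e : ℕ) [ExpChar F p] (hodd : Odd (p ^ m))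
    {u : F} (hu : u ^ p ^ m = (-1) ^ e * u) :
    ((-1) ^ e * u + u⁻¹) ^ p ^ m = (-1) ^ e * ((-1) ^ e * u + u⁻¹) := by
  rw [add_pow_expChar_pow, mul_pow, inv_pow, hu, ← pow_mul, mul_comm e, pow_mul,
    hodd.neg_one_pow, mul_inv, ← inv_pow, inv_neg_one]
  ring

theorem binomial_pow_eq_neg_one {p j q : ℕ} [ExpChar F p] (hq : q = p ^ j) (hqodd : Odd q)
    {a u : F} (ha : a ^ ((q ^ 4 - 1) / 2) = -1) (hu : u = a ^ ((q - 1) * (q ^ 2 + 1) / 4))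
    (hs : (-1) ^ ((q - 1) / 2) * u + u⁻¹ ≠ 0) :
    (a ^ ((q + 1) / 2) * ((-1) ^ ((q - 1) / 2) * u + u⁻¹)) ^ ((q ^ 4 - 1) / 2) = -1 := by
  have hq2 : q ^ 2 = p ^ (2 * j) := by rw [hq, ← pow_mul, mul_comm]
  have hfrob : u ^ q ^ 2 = (-1) ^ ((q - 1) / 2) * u :=
    hu ▸ pow_sq_eq_neg_one_pow_mul_of_pow_eq_neg_one hqodd ha
  have hs_pow : ((-1) ^ ((q - 1) / 2) * u + u⁻¹) ^ ((q ^ 4 - 1) / 2) = (-1) ^ ((q - 1) / 2) := by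
    refine pow_pow_four_sub_one_div_two_of_pow_sq hqodd hs ?_
    rw [hq2] at hfrob ⊢
    exact neg_one_pow_mul_add_inv_pow_expChar_pow p _ _ (hq2 ▸ hqodd.pow) hfrob
  have ha_pow : (a ^ ((q + 1) / 2)) ^ ((q ^ 4 - 1) / 2) = (-1) ^ ((q - 1) / 2 + 1) := by
    rw [← pow_mul, mul_comm, pow_mul, ha]
    congr 1
    obtain ⟨t, rfl⟩ := hqodd
    omega
  rw [mul_pow, hs_pow, ha_pow, pow_succ, mul_right_comm, ← pow_add, ← two_mul, pow_mul,
    neg_one_sq, one_pow, one_mul]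

end

theorem a2_is_nonsquare_general
    (k : ℕ) (n : ℕ) (hn : n = 4 * k)
    (F : Type*) [Field F] [Fintype F] (hF : Fintype.card F = 3 ^ n)
    (a₁ : F) (ha₁ : a₁ ^ ((3 ^ n - 1) / 2) = -1)
    (I : F) (hI : orderOf I = 4)
    (ε : F) (hε : ε = 1 ∨ ε = -1)
    (a₂ : F)
    (ha₂ : a₂ = ε * I ^ k * a₁ ^ ((3 ^ k + 1) / 2) *
      ((-1 : F) ^ k * a₁ ^ ((3 ^ k - 1) * (3 ^ (2 * k) + 1) / 4) +
        (a₁ ^ ((3 ^ k - 1) * (3 ^ (2 * k) + 1) / 4))⁻¹))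
    (ha₂0 : a₂ ≠ 0) :
    a₂ ^ ((3 ^ n - 1) / 2) = -1 := by
  have : Fact (Nat.Prime 3) := ⟨Nat.prime_three⟩
  have : CharP F 3 := charP_of_card_eq_prime_pow hF
  have hodd : Odd (3 ^ k) := Odd.pow ⟨1, rfl⟩
  have h4 : 4 ∣ ((3 ^ k) ^ 4 - 1) / 2 := hodd.four_dvd_pow_four_sub_one_div_two
  have hσ : (-1 : F) ^ k = (-1) ^ ((3 ^ k - 1) / 2) := by
    rw [neg_one_pow_eq_pow_mod_two, ← Nat.three_pow_sub_one_div_two_mod_two,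
      ← neg_one_pow_eq_pow_mod_two]
  rw [hn, pow_mul'] at ha₁ ⊢
  rw [pow_mul', hσ, mul_assoc] at ha₂
  set u := a₁ ^ ((3 ^ k - 1) * ((3 ^ k) ^ 2 + 1) / 4) with hu
  have hs : (-1) ^ ((3 ^ k - 1) / 2) * u + u⁻¹ ≠ 0 := by
    rintro h
    rw [h, mul_zero, mul_zero] at ha₂
    exact ha₂0 ha₂
  have hεN : ε ^ (((3 ^ k) ^ 4 - 1) / 2) = 1 := by
    rcases hε with rfl | rfl
    · exact one_pow _
    · exact Even.neg_one_pow (even_iff_two_dvd.mpr (dvd_trans (by norm_num) h4))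
  have hIN : (I ^ k) ^ (((3 ^ k) ^ 4 - 1) / 2) = 1 := by
    rw [← pow_mul]
    exact orderOf_dvd_iff_pow_eq_one.mp (hI ▸ h4.mul_left k)
  rw [ha₂, mul_pow, mul_pow, hεN, hIN, one_mul, one_mul]
  exact binomial_pow_eq_neg_one rfl hodd ha₁ hu hs

theorem a2_is_nonsquare
    (k : ℕ) (hk : 0 < k) (n : ℕ) (hn : n = 4 * k)
    (F : Type*) [Field F] [Fintype F] (hF : Fintype.card F = 3 ^ n)
    (a₁ : F) (ha₁ : a₁ ^ ((3 ^ n - 1) / 2) = -1)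
    (I : F) (hI : orderOf I = 4)
    (ε : F) (hε : ε = 1 ∨ ε = -1)
    (a₂ : F)
    (ha₂ : a₂ = ε * I ^ k * a₁ ^ ((3 ^ k + 1) / 2) *
      ((-1 : F) ^ k * a₁ ^ ((3 ^ k - 1) * (3 ^ (2 * k) + 1) / 4) +
        (a₁ ^ ((3 ^ k - 1) * (3 ^ (2 * k) + 1) / 4))⁻¹))
    (ha₂0 : a₂ ≠ 0) :
    a₂ ^ ((3 ^ n - 1) / 2) = -1 :=
  a2_is_nonsquare_general k n hn F hF a₁ ha₁ I hI ε hε a₂ ha₂ ha₂0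
end

section
/- Let n = 4k, a_1 a nonsquare in F_{3^n}, and c ∈ F_{3^n}^* satisfying c^{2·3^k(3^{2k}-1)} = -a_2^{-(3^{2k}-1)} where a_2 satisfies a_2^{3^{2k}-1} = (-1)^k a_1^{(3^k+1)(3^{2k}-1)/2}. Then a_1^{3^{2k}-1} c^{2(3^k+1)(3^{2k}-1)} = -1; equivalently, the relative trace from F_{3^n} to F_{3^{2k}} of a_1 c^{2(3^k+1)} is zero. -/
/-!
Write `q = 3^k` and `Q = q^2 = 2e + 1`, so that `|F| = Q^2`. The element `x = c^(2(Q-1))` satisfies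
`x^(Q+1) = 1`, and the hypothesis on `c` says `x^q = -b⁻¹` with `b = a₂^(Q-1)`. Raising to the `q`-th
power gives `x = -b^q`, hence `c^(2(q+1)(Q-1)) = x^(q+1) = b^(q-1) = a₁^((q^2-1)e)`, and multiplying
by `a₁^(Q-1)` produces `a₁^((Q^2-1)/2) = -1`. Then `z = a₁ c^(2(q+1))` has `z^(Q-1) = -1`, that is
`z^Q = -z`.
-/

theorem FiniteField.pow_sub_one_pow_add_one_eq_one {F : Type*} [Field F] [Fintype F] {Q : ℕ}
    (hF : Fintype.card F = Q ^ 2) {c : F} (hc : c ≠ 0) : (c ^ (Q - 1)) ^ (Q + 1) = 1 := by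
  rw [← pow_mul, mul_comm, ← Nat.sq_sub_sq, one_pow, ← hF]
  exact FiniteField.pow_card_sub_one_eq_one c hc

theorem pow_succ_eq_pow_pred_of_pow_eq_neg_inv {K : Type*} [Field K] {x b : K} {q : ℕ}
    (hq : Odd q) (hb : b ≠ 0) (hx : x ^ (q ^ 2 + 1) = 1) (hxq : x ^ q = -b⁻¹) :
    x ^ (q + 1) = b ^ (q - 1) := by
  have hx' : x = -b ^ q := by
    rw [pow_succ, sq, pow_mul, hxq, hq.neg_pow] at hx
    rw [← inv_eq_of_mul_eq_one_right hx, inv_neg, inv_pow, inv_inv]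
  obtain ⟨m, rfl⟩ := hq
  rw [pow_succ, hxq, hx', Nat.add_sub_cancel, pow_succ]
  field_simp

theorem pow_mul_neg_one_pow_mul_pow_pow_eq_neg_one {K : Type*} [Field K] {a : K} {q e : ℕ}
    (k : ℕ) (hq : Odd q) (he : q ^ 2 = 2 * e + 1) (ha : a ^ (2 * e * (e + 1)) = -1) :
    a ^ (2 * e) * ((-1) ^ k * a ^ ((q + 1) * e)) ^ (q - 1) = -1 := by
  obtain ⟨m, rfl⟩ := hq
  have hqe : (2 * m + 1 + 1) * e * (2 * m) = 2 * e * e := by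
    have : 2 * m * (2 * m + 2) = 2 * e := by nlinarith
    nlinarith
  have hsign : ((-1 : K) ^ k) ^ (2 * m) = 1 := by
    rw [← pow_mul, mul_comm, pow_mul, (even_two_mul m).neg_one_pow, one_pow]
  rw [Nat.add_sub_cancel, mul_pow, hsign, one_mul, ← pow_mul, hqe, ← pow_add, ← ha]
  ring_nf

theorem trace_of_a1_c_vanishes_general
    (k : ℕ) (n : ℕ) (hn : n = 4 * k)
    (F : Type*) [Field F] [Fintype F] (hF : Fintype.card F = 3 ^ n)
    (a₁ : F) (ha₁ : a₁ ^ ((3 ^ n - 1) / 2) = -1)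
    (a₂ : F) (ha₂0 : a₂ ≠ 0)
    (ha₂ : a₂ ^ (3 ^ (2 * k) - 1) = (-1 : F) ^ k * a₁ ^ ((3 ^ k + 1) * (3 ^ (2 * k) - 1) / 2))
    (c : F) (hc : c ≠ 0)
    (hceq : c ^ (2 * 3 ^ k * (3 ^ (2 * k) - 1)) = -(a₂⁻¹) ^ (3 ^ (2 * k) - 1)) :
    a₁ ^ (3 ^ (2 * k) - 1) * c ^ (2 * (3 ^ k + 1) * (3 ^ (2 * k) - 1)) = -1 ∧
    a₁ * c ^ (2 * (3 ^ k + 1)) + (a₁ * c ^ (2 * (3 ^ k + 1))) ^ (3 ^ (2 * k)) = 0 := by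
  subst hn
  have hq : Odd (3 ^ k) := Odd.pow (by decide)
  obtain ⟨e, hQ⟩ : Odd (3 ^ (2 * k)) := Odd.pow (by decide)
  have hqQ : (3 ^ k) ^ 2 = 2 * e + 1 := by rw [← pow_mul, mul_comm, hQ]
  have hcard : Fintype.card F = (2 * e + 1) ^ 2 := by rw [hF, ← hQ, ← pow_mul]; ring_nf
  have ha₁' : a₁ ^ (2 * e * (e + 1)) = -1 := by
    rwa [show 4 * k = 2 * k * 2 by ring, pow_mul, hQ,
      show (2 * e + 1) ^ 2 - 1 = 2 * (2 * e * (e + 1)) by ring_nf; omega,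
      Nat.mul_div_cancel_left _ two_pos] at ha₁
  rw [hQ, Nat.add_sub_cancel] at ha₂ hceq ⊢
  rw [show (3 ^ k + 1) * (2 * e) / 2 = (3 ^ k + 1) * e by
    rw [mul_left_comm, Nat.mul_div_cancel_left _ two_pos]] at ha₂
  have hx := FiniteField.pow_sub_one_pow_add_one_eq_one hcard (pow_ne_zero 2 hc)
  rw [Nat.add_sub_cancel, ← hqQ] at hx
  have hxq : ((c ^ 2) ^ (2 * e)) ^ 3 ^ k = -(a₂ ^ (2 * e))⁻¹ := by
    rw [← pow_mul, ← pow_mul, ← inv_pow, ← hceq]; ring_nf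
  have hnorm : a₁ ^ (2 * e) * c ^ (2 * (3 ^ k + 1) * (2 * e)) = -1 := by
    rw [show c ^ (2 * (3 ^ k + 1) * (2 * e)) = ((c ^ 2) ^ (2 * e)) ^ (3 ^ k + 1) by
        rw [← pow_mul, ← pow_mul]; ring_nf,
      pow_succ_eq_pow_pred_of_pow_eq_neg_inv hq (pow_ne_zero _ ha₂0) hx hxq, ha₂]
    exact pow_mul_neg_one_pow_mul_pow_pow_eq_neg_one k hq hqQ ha₁'
  refine ⟨hnorm, ?_⟩
  rw [pow_succ, mul_pow, ← pow_mul, hnorm]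
  ring

theorem trace_of_a1_c_vanishes
    (k : ℕ) (hk : 0 < k) (n : ℕ) (hn : n = 4 * k)
    (F : Type*) [Field F] [Fintype F] (hF : Fintype.card F = 3 ^ n)
    (a₁ : F) (ha₁ : a₁ ^ ((3 ^ n - 1) / 2) = -1)
    (a₂ : F) (ha₂0 : a₂ ≠ 0)
    (ha₂ : a₂ ^ (3 ^ (2 * k) - 1) = (-1 : F) ^ k * a₁ ^ ((3 ^ k + 1) * (3 ^ (2 * k) - 1) / 2))
    (c : F) (hc : c ≠ 0)
    (hceq : c ^ (2 * 3 ^ k * (3 ^ (2 * k) - 1)) = -(a₂⁻¹) ^ (3 ^ (2 * k) - 1)) :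
    a₁ ^ (3 ^ (2 * k) - 1) * c ^ (2 * (3 ^ k + 1) * (3 ^ (2 * k) - 1)) = -1 ∧
    a₁ * c ^ (2 * (3 ^ k + 1)) + (a₁ * c ^ (2 * (3 ^ k + 1))) ^ (3 ^ (2 * k)) = 0 :=
  trace_of_a1_c_vanishes_general k n hn F hF a₁ ha₁ a₂ ha₂0 ha₂ c hc hceq
end

section
/- Let n = 2k, and suppose c ∈ F_{3^n}^* satisfies a_1 c^{3^k - 1} = a_2, where a_2^{3^k-1} = -a_1^{2(3^k-1)}. Then the relative trace from F_{3^n} to F_{3^k} of a_1 c^2 is zero and the relative trace of a_2 c^4 is zero. -/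
theorem traces_vanish_trinomial
    (k : ℕ) (hk : 0 < k) (n : ℕ) (hn : n = 2 * k)
    (F : Type*) [Field F] [Fintype F] (hF : Fintype.card F = 3 ^ n)
    (a₁ a₂ : F) (ha₁0 : a₁ ≠ 0) (ha₂0 : a₂ ≠ 0)
    (ha₂ : a₂ ^ (3 ^ k - 1) = -a₁ ^ (2 * (3 ^ k - 1)))
    (c : F) (hc : c ≠ 0)
    (hceq : a₁ * c ^ (3 ^ k - 1) = a₂) :
    a₁ * c ^ 2 + (a₁ * c ^ 2) ^ (3 ^ k) = 0 ∧
    a₂ * c ^ 4 + (a₂ * c ^ 4) ^ (3 ^ k) = 0 := by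
  set q := 3 ^ k with hq
  have hq1 : 1 ≤ q := Nat.one_le_pow _ _ (by norm_num)
  have hcard : ∀ x : F, x ^ (q * q) = x := by
    intro x
    have h := FiniteField.pow_card x
    rwa [hF, hn, two_mul, pow_add] at h
  have e1 : a₁ * c ^ q = a₂ * c := by
    calc a₁ * c ^ q = a₁ * c ^ (q - 1) * c := by
          rw [mul_assoc, ← pow_succ]; congr 2; omega
    _ = a₂ * c := by rw [hceq]
  have h3 : a₁ ^ (2 * (q - 1)) * a₁ ^ 2 = (a₁ ^ q) ^ 2 := by
    rw [← pow_mul, ← pow_add]; congr 1; omega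
  have e3 : a₂ ^ q * a₁ ^ 2 = -((a₁ ^ q) ^ 2 * a₂) := by
    calc a₂ ^ q * a₁ ^ 2 = a₂ ^ (q - 1) * a₂ * a₁ ^ 2 := by
          rw [← pow_succ]; congr 2; omega
    _ = -(a₁ ^ (2 * (q - 1)) * a₁ ^ 2) * a₂ := by rw [ha₂]; ring
    _ = -((a₁ ^ q) ^ 2 * a₂) := by rw [h3]; ring
  have e2 : a₁ ^ q * c = a₂ ^ q * c ^ q := by
    have h := congrArg (· ^ q) e1
    simp only [mul_pow, ← pow_mul] at h
    rwa [hcard c] at h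
  have hA : a₁ ^ q ≠ 0 := pow_ne_zero _ ha₁0
  have h4 : c * a₁ ^ 2 + a₁ ^ q * (a₂ * c ^ q) = 0 := by
    apply mul_left_cancel₀ hA
    rw [mul_zero]
    linear_combination a₁ ^ 2 * e2 + c ^ q * e3
  have g1 : a₁ * c ^ 2 + a₁ ^ q * (c ^ q) ^ 2 = 0 := by
    apply mul_left_cancel₀ ha₂0
    rw [mul_zero]
    linear_combination (-(a₁ * c)) * e1 + c ^ q * h4
  have g2 : a₂ * c ^ 4 + a₂ ^ q * (c ^ q) ^ 4 = 0 := by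
    apply mul_left_cancel₀ (pow_ne_zero 2 ha₁0)
    rw [mul_zero]
    linear_combination (c ^ q) ^ 4 * e3 + a₂ * (a₁ * c ^ 2 - a₁ ^ q * (c ^ q) ^ 2) * g1
  constructor
  · calc a₁ * c ^ 2 + (a₁ * c ^ 2) ^ q
        = a₁ * c ^ 2 + a₁ ^ q * (c ^ q) ^ 2 := by
          rw [mul_pow, ← pow_mul, ← pow_mul, mul_comm q 2, pow_mul]
    _ = 0 := g1
  · calc a₂ * c ^ 4 + (a₂ * c ^ 4) ^ q
        = a₂ * c ^ 4 + a₂ ^ q * (c ^ q) ^ 4 := by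
          rw [mul_pow, ← pow_mul, ← pow_mul, mul_comm q 4, pow_mul]
    _ = 0 := g2
end

section
/- Let p be an odd prime, n = 2m even, and f : F_p^n → F_p a function. Suppose V is an m-dimensional subspace of F_p^n whose orthogonal complement V^⊥ (with respect to a fixed nondegenerate bilinear form) is supplementary to V, such that all second-order derivatives D_{c,d} f(x) = f(x+c+d) - f(x+c) - f(x+d) + f(x) vanish identically for c, d ∈ V, and all first-order derivatives D_c f(x) = f(x+c) - f(x) are balanced on F_p^n for every nonzero c ∈ V. Then for every b ∈ F_p^n, the Walsh coefficient S_f(b) = Σ_{x} ω^{f(x) - b·x} satisfies |S_f(b)|^2 = p^n, where ω = e^{2πi/p}; that is, f is a bent function. -/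
/-!
Split `F_p^n = W ⊕ V` with `W` any complement of `V`. Vanishing second derivatives along `V`
make `f (u + v) = f u + φ_u v` with `φ_u : V → F_p` additive, so the inner character sum over
`v ∈ V` in `S_f(b)` is `|V|` when `φ_u = b·` on `V` and `0` otherwise. Hence `S_f(b)` is `|V|`
times a sum of roots of unity over `T = {u ∈ W | φ_u = b·}`. Balancedness of `D_v f` gives
`∑_{u ∈ W} ω^{φ_u v} = 0` for `v ≠ 0`, and counting `∑_u ∑_v ω^{φ_u v - b·v}` both ways
yields `|T| |V| = |W|`. As `|V| = |W| = p^m`, `T` is a singleton and `|S_f(b)| = p^m`.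
-/

open Finset

section Decomposition

variable {R E M : Type*} [Ring R] [AddCommGroup E] [Module R E] [AddCommMonoid M]
  {V W : Submodule R E} [Fintype V] [Fintype W]

theorem Submodule.sum_eq_sum_sum_of_isCompl [Fintype E] (hVW : IsCompl V W) (g : E → M) :
    ∑ x, g x = ∑ w : W, ∑ v : V, g (w + v) := by
  rw [← (Submodule.prodEquivOfIsCompl V W hVW).toEquiv.sum_comp g, Fintype.sum_prod_type,
    Finset.sum_comm]
  simp [Submodule.coe_prodEquivOfIsCompl', add_comm]

end Decomposition

section CharacterSums

variable {G A R : Type*} [Fintype G] [AddCommGroup A] [CommRing R] [IsDomain R]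

theorem AddChar.sum_apply_hom_eq_ite [AddCommGroup G] {ψ : AddChar A R}
    (hψ : Function.Injective ψ) (K : G →+ A) [Decidable (K = 0)] :
    ∑ g, ψ (K g) = if K = 0 then (Fintype.card G : R) else 0 := by
  have hzero : ψ.compAddMonoidHom K = 0 ↔ K = 0 := by
    refine ⟨fun h => ?_, by rintro rfl; ext; simp⟩
    ext g
    exact hψ (by simpa using DFunLike.congr_fun h g)
  simpa only [AddChar.compAddMonoidHom_apply, hzero] using (ψ.compAddMonoidHom K).sum_eq_ite

theorem AddChar.sum_apply_eq_zero_of_card_fiber_eq [Fintype A] [DecidableEq A] {ψ : AddChar A R}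
    (hψ : ψ ≠ 1) (g : G → A) (c : ℕ) (hg : ∀ t, #{x | g x = t} = c) :
    ∑ x, ψ (g x) = 0 := by
  rw [← Finset.sum_fiberwise' univ g ψ]
  simp only [sum_const, hg, ← smul_sum, AddChar.sum_eq_zero_of_ne_one hψ, smul_zero]

end CharacterSums

def AffineAlong {R E A : Type*} [Ring R] [AddCommGroup E] [Module R E] [AddCommGroup A]
    (f : E → A) (V : Submodule R E) : Prop :=
  ∀ c ∈ V, ∀ d ∈ V, ∀ x, f (x + c + d) - f (x + c) - f (x + d) + f x = 0

namespace AffineAlong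

variable {R E A : Type*} [Ring R] [AddCommGroup E] [Module R E] [AddCommGroup A]
  {V W : Submodule R E} {f : E → A}

def linearPart (hf : AffineAlong f V) (u : E) : V →+ A :=
  AddMonoidHom.mk' (fun v => f (u + v) - f u) fun v w => by
    rw [← sub_eq_zero, ← hf v v.2 w w.2 u, Submodule.coe_add, ← add_assoc]
    abel

theorem linearPart_apply (hf : AffineAlong f V) (u : E) (v : V) :
    hf.linearPart u v = f (u + v) - f u := rfl

theorem linearPart_add_left (hf : AffineAlong f V) (u : E) (w : V) :
    hf.linearPart (u + w) = hf.linearPart u := by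
  ext v
  rw [linearPart_apply, linearPart_apply, ← sub_eq_zero, ← hf w w.2 v v.2 u]
  abel

variable [Fintype E] [Fintype V] [Fintype W] {ψ : AddChar A ℂ}

theorem sum_addChar_linearPart_eq_zero (hf : AffineAlong f V) (hVW : IsCompl V W) {v : V}
    (hv : ∑ x, ψ (f (x + v) - f x) = 0) :
    ∑ u : W, ψ (hf.linearPart u v) = 0 := by
  have hsplit :
      ∑ x, ψ (f (x + v) - f x) = Fintype.card V • ∑ u : W, ψ (hf.linearPart u v) := by
    rw [Submodule.sum_eq_sum_sum_of_isCompl hVW, smul_sum]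
    refine sum_congr rfl fun u _ => ?_
    simp only [← hf.linearPart_apply, hf.linearPart_add_left, sum_const, card_univ]
  rw [hsplit] at hv
  exact (smul_eq_zero.mp hv).resolve_left Fintype.card_ne_zero

open Classical in
theorem card_filter_linearPart_eq_mul (hf : AffineAlong f V) (hVW : IsCompl V W)
    (hψ : Function.Injective ψ)
    (hbal : ∀ v : V, v ≠ 0 → ∑ x, ψ (f (x + v) - f x) = 0) (L : V →+ A) :
    #{u : W | hf.linearPart u = L} * Fintype.card V = Fintype.card W := by
  have hrows : ∑ u : W, ∑ v : V, ψ ((hf.linearPart u - L) v) =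
      (#{u : W | hf.linearPart u = L} * Fintype.card V : ℕ) := by
    simp only [AddChar.sum_apply_hom_eq_ite hψ, sub_eq_zero, sum_ite, sum_const_zero, add_zero,
      sum_const, nsmul_eq_mul, Nat.cast_mul]
  have hcols : ∑ u : W, ∑ v : V, ψ ((hf.linearPart u - L) v) = Fintype.card W := by
    rw [sum_comm, sum_eq_single (0 : V)]
    · simp
    · intro v _ hv
      simp only [AddMonoidHom.sub_apply, AddChar.map_sub_eq_div, ← sum_div,
        hf.sum_addChar_linearPart_eq_zero hVW (hbal v hv), zero_div]
    · simp
  exact_mod_cast hrows.symm.trans hcols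

open Classical in
theorem sum_addChar_sub_eq (hf : AffineAlong f V) (hVW : IsCompl V W)
    (hψ : Function.Injective ψ) (B : E →+ A) :
    ∑ x, ψ (f x - B x) = Fintype.card V *
      ∑ u ∈ {u : W | hf.linearPart u = B.comp V.subtype.toAddMonoidHom}, ψ (f u - B u) := by
  have hfactor : ∀ (u : W) (v : V), ψ (f (u + v) - B (u + v)) =
      ψ (f u - B u) * ψ ((hf.linearPart u - B.comp V.subtype.toAddMonoidHom) v) := by
    intro u v
    rw [← AddChar.map_add_eq_mul, AddMonoidHom.sub_apply, linearPart_apply, map_add]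
    congr 1
    simp only [AddMonoidHom.coe_comp, Function.comp_apply, LinearMap.toAddMonoidHom_coe,
      Submodule.subtype_apply]
    abel
  calc ∑ x, ψ (f x - B x)
      = ∑ u : W, ψ (f u - B u) *
          ∑ v : V, ψ ((hf.linearPart u - B.comp V.subtype.toAddMonoidHom) v) := by
        simp only [Submodule.sum_eq_sum_sum_of_isCompl hVW, hfactor, mul_sum]
    _ = ∑ u : W, if hf.linearPart u = B.comp V.subtype.toAddMonoidHom
          then ψ (f u - B u) * Fintype.card V else 0 := by
        simp only [AddChar.sum_apply_hom_eq_ite hψ, sub_eq_zero, mul_ite, mul_zero]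
    _ = _ := by
        rw [sum_ite, sum_const_zero, add_zero, mul_sum]
        simp only [mul_comm]

open Classical in
theorem norm_sum_addChar_sub_eq_card [Finite A] (hf : AffineAlong f V) (hVW : IsCompl V W)
    (hψ : Function.Injective ψ)
    (hbal : ∀ v : V, v ≠ 0 → ∑ x, ψ (f (x + v) - f x) = 0)
    (hcard : Fintype.card V = Fintype.card W) (B : E →+ A) :
    ‖∑ x, ψ (f x - B x)‖ = Fintype.card V := by
  obtain ⟨u₀, hu₀⟩ : ∃ u₀,
      ({u : W | hf.linearPart u = B.comp V.subtype.toAddMonoidHom} : Finset W) = {u₀} := by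
    rw [← card_eq_one, ← Nat.mul_eq_right (Fintype.card_ne_zero (α := V))]
    exact (hf.card_filter_linearPart_eq_mul hVW hψ hbal _).trans hcard.symm
  rw [hf.sum_addChar_sub_eq hVW hψ, hu₀, sum_singleton, norm_mul, AddChar.norm_apply, mul_one,
    Complex.norm_natCast]

end AffineAlong

theorem bentness_criterion_general
    (p : ℕ) [Fact p.Prime]
    (m n : ℕ) (hn : n = 2 * m)
    (f : (Fin n → ZMod p) → ZMod p)
    (V Vp : Submodule (ZMod p) (Fin n → ZMod p))
    (hdim : Module.finrank (ZMod p) V = m)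
    (hsupp : IsCompl V Vp)
    (hsecond : ∀ c ∈ V, ∀ d ∈ V, ∀ x : Fin n → ZMod p,
      f (x + c + d) - f (x + c) - f (x + d) + f x = 0)
    (hbal : ∀ c ∈ V, c ≠ 0 → ∀ t : ZMod p,
      (Finset.univ.filter (fun x : Fin n → ZMod p => f (x + c) - f x = t)).card = p ^ (n - 1)) :
    ∀ b : Fin n → ZMod p,
      ‖(∑ x : Fin n → ZMod p,
        Complex.exp (2 * Real.pi * Complex.I * ((f x - ∑ i, b i * x i).val : ℕ) / p))‖ ^ 2
        = p ^ n := by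
  classical
  intro b
  have hdimVp : Module.finrank (ZMod p) Vp = m := by
    have := Submodule.finrank_add_eq_of_isCompl hsupp
    rw [Module.finrank_fin_fun, hdim] at this
    omega
  have hcard : ∀ U : Submodule (ZMod p) (Fin n → ZMod p), Module.finrank (ZMod p) U = m →
      Fintype.card U = p ^ m := fun U hU => by
    rw [Module.card_eq_pow_finrank (K := ZMod p), hU, ZMod.card]
  have hψ : (ZMod.stdAddChar : AddChar (ZMod p) ℂ) ≠ 1 := by
    simpa using ZMod.isPrimitive_stdAddChar p one_ne_zero
  have hbal' : ∀ v : V, v ≠ 0 → ∑ x, ZMod.stdAddChar (f (x + v) - f x) = 0 := fun v hv =>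
    AddChar.sum_apply_eq_zero_of_card_fiber_eq hψ _ _ (hbal v v.2 (by simpa using hv))
  have hwalsh := AffineAlong.norm_sum_addChar_sub_eq_card hsecond hsupp ZMod.injective_stdAddChar
    hbal' ((hcard V hdim).trans (hcard Vp hdimVp).symm)
    (AddMonoidHom.mk' (b ⬝ᵥ ·) (dotProduct_add b))
  simp only [AddMonoidHom.mk'_apply, dotProduct, ZMod.stdAddChar_apply, ZMod.toCircle_apply,
    hcard V hdim] at hwalsh
  rw [hwalsh, hn]
  push_cast
  ring

/-- bentness criterion via derivatives on a subspace with
supplementary orthogonal complement. -/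
theorem bentness_criterion
    (p : ℕ) [Fact p.Prime] (hp : Odd p)
    (m n : ℕ) (hn : n = 2 * m)
    (f : (Fin n → ZMod p) → ZMod p)
    (V Vp : Submodule (ZMod p) (Fin n → ZMod p))
    (hdim : Module.finrank (ZMod p) V = m)
    (hVp : ∀ y : Fin n → ZMod p, y ∈ Vp ↔ ∀ v ∈ V, (∑ i, v i * y i) = 0)
    (hsupp : IsCompl V Vp)
    (hsecond : ∀ c ∈ V, ∀ d ∈ V, ∀ x : Fin n → ZMod p,
      f (x + c + d) - f (x + c) - f (x + d) + f x = 0)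
    (hbal : ∀ c ∈ V, c ≠ 0 → ∀ t : ZMod p,
      (Finset.univ.filter (fun x : Fin n → ZMod p => f (x + c) - f x = t)).card = p ^ (n - 1)) :
    ∀ b : Fin n → ZMod p,
      ‖(∑ x : Fin n → ZMod p,
        Complex.exp (2 * Real.pi * Complex.I * ((f x - ∑ i, b i * x i).val : ℕ) / p))‖ ^ 2
        = p ^ n :=
  bentness_criterion_general p m n hn f V Vp hdim hsupp hsecond hbal
end
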